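/- Suppose that for every s > 2, the triangular lattice A₂ is the unique minimizer (up to orthogonal transformation) among two-dimensional lattices of co-volume 1 of the function F_s(L) = −Σ_{p ∈ L, p ≠ 0} (s·log|p| + 1)/|p|^s; i.e., F_s(L) ≥ F_s(A₂) with equality iff L = O·A₂ for some orthogonal O. Then for all α > β > 2 and every lattice L of co-volume 1 that is not the image of A₂ under an orthogonal transformation, ζ_L(α) − ζ_{A₂}(α) > (α/β)·(ζ_L(β) − ζ_{A₂}(β)). -/

import Mathlib

noncomputable section

/-- A point of the Euclidean plane with coordinates `a`, `b`. -/
def vec2 (a b : ℝ) : EuclideanSpace ℝ (Fin 2) := (WithLp.equiv 2 (Fin 2 → ℝ)).symm ![a, b]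

/-- The lattice (as a set of points) generated by `u` and `v`. -/
def latticeSet (u v : EuclideanSpace ℝ (Fin 2)) : Set (EuclideanSpace ℝ (Fin 2)) :=
  {p | ∃ m n : ℤ, p = (m : ℝ) • u + (n : ℝ) • v}

/-- The determinant of the pair of plane vectors `(u, v)`. -/
def det2 (u v : EuclideanSpace ℝ (Fin 2)) : ℝ := u 0 * v 1 - u 1 * v 0

/-- `L` is a two-dimensional lattice, i.e. `L = ℤu ⊕ ℤv` for a basis `(u,v)` of ℝ². -/
def IsLattice2 (L : Set (EuclideanSpace ℝ (Fin 2))) : Prop :=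
  ∃ u v : EuclideanSpace ℝ (Fin 2), det2 u v ≠ 0 ∧ L = latticeSet u v

/-- `L` is a two-dimensional lattice of co-volume `V = |det(u,v)|`. -/
def IsLattice2OfCovol (L : Set (EuclideanSpace ℝ (Fin 2))) (V : ℝ) : Prop :=
  ∃ u v : EuclideanSpace ℝ (Fin 2), det2 u v ≠ 0 ∧ |det2 u v| = V ∧ L = latticeSet u v

/-- The Epstein zeta function of a set of points: `ζ_L(s) = Σ'_{p ∈ L, p ≠ 0} |p|^{-s}`. -/
def epsteinZeta (L : Set (EuclideanSpace ℝ (Fin 2))) (s : ℝ) : ℝ :=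
  ∑' p : ↥(L \ {0}), ‖(p : EuclideanSpace ℝ (Fin 2))‖ ^ (-s)

/-- The Lennard-Jones type energy `E_f[L] = Σ'_{p ∈ L, p ≠ 0} (a|p|^{-α} - b|p|^{-β})`. -/
def LJenergy (a b α β : ℝ) (L : Set (EuclideanSpace ℝ (Fin 2))) : ℝ :=
  ∑' p : ↥(L \ {0}),
    (a * ‖(p : EuclideanSpace ℝ (Fin 2))‖ ^ (-α) - b * ‖(p : EuclideanSpace ℝ (Fin 2))‖ ^ (-β))

/-- The triangular lattice `A₂ = √(2/√3)·[ℤ(1,0) ⊕ ℤ(1/2,√3/2)]`, of co-volume 1. -/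
def triangularLattice : Set (EuclideanSpace ℝ (Fin 2)) :=
  latticeSet (Real.sqrt (2 / Real.sqrt 3) • vec2 1 0)
    (Real.sqrt (2 / Real.sqrt 3) • vec2 (1 / 2) (Real.sqrt 3 / 2))

/-- The square lattice `ℤ² = ℤ(1,0) ⊕ ℤ(0,1)`. -/
def squareLattice : Set (EuclideanSpace ℝ (Fin 2)) := latticeSet (vec2 1 0) (vec2 0 1)

/-- `L` is the image of `L'` under an orthogonal transformation of ℝ². -/
def IsRotationOf (L L' : Set (EuclideanSpace ℝ (Fin 2))) : Prop :=
  ∃ O : EuclideanSpace ℝ (Fin 2) ≃ₗᵢ[ℝ] EuclideanSpace ℝ (Fin 2), L = O '' L'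

/-- The unit co-volume lattice parametrized by `(x, y)` in the half-fundamental domain:
`ℤu ⊕ ℤv` with `u = (1/√y, 0)` and `v = (x/√y, √y)`. -/
def latticeXY (x y : ℝ) : Set (EuclideanSpace ℝ (Fin 2)) :=
  latticeSet (vec2 (1 / Real.sqrt y) 0) (vec2 (x / Real.sqrt y) (Real.sqrt y))

/-- The Riemann zeta function `ζ(s) = Σ_{m ≥ 1} m^{-s}` (real variable version). -/
def riemannZetaReal (s : ℝ) : ℝ := ∑' n : ℕ+, (n : ℝ) ^ (-s)

end

/-- The energy appearing in Conjecture 1: `F_s(L) = -Σ'_{p ∈ L, p ≠ 0} (s·log|p| + 1)/|p|^s`. -/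
noncomputable def Fenergy (s : ℝ) (L : Set (EuclideanSpace ℝ (Fin 2))) : ℝ :=
  -∑' p : ↥(L \ {0}),
    (s * Real.log ‖(p : EuclideanSpace ℝ (Fin 2))‖ + 1) / ‖(p : EuclideanSpace ℝ (Fin 2))‖ ^ s

/-!
For a unit co-volume lattice `L`, put `φ(t) = (ζ_L(t) - ζ_{A₂}(t)) / t`. Differentiating the
Epstein series termwise gives `φ'(t) = (F_t(L) - F_t(A₂)) / t²`, which the hypothesis makes
positive on `(2, ∞)` when `L` is not a rotation of `A₂`. Hence `φ(β) < φ(α)`, and clearing the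
denominators is the claim. Termwise differentiation is justified by
`|log r| r^{-t} ≤ (r^{-(t-ε)} + r^{-(t+ε)}) / ε` together with the convergence of
`Σ_{p ∈ L \ {0}} ‖p‖^{-t}` for every `t > 2`.
-/

open Module

local notation "E²" => EuclideanSpace ℝ (Fin 2)

theorem linearIndependent_of_det2_ne_zero {u v : E²} (hdet : det2 u v ≠ 0) :
    LinearIndependent ℝ ![u, v] := by
  refine LinearIndependent.pair_iff.2 fun a b h => ?_
  have h0 : a * u 0 + b * v 0 = 0 := by simpa using congrFun (congrArg (⇑) h) 0
  have h1 : a * u 1 + b * v 1 = 0 := by simpa using congrFun (congrArg (⇑) h) 1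
  unfold det2 at hdet
  constructor
  · refine (mul_eq_zero.1 ?_).resolve_right hdet
    linear_combination v 1 * h0 - v 0 * h1
  · refine (mul_eq_zero.1 ?_).resolve_right hdet
    linear_combination u 0 * h1 - u 1 * h0

noncomputable def basisOfDet2 {u v : E²} (hdet : det2 u v ≠ 0) : Basis (Fin 2) ℝ E² :=
  basisOfLinearIndependentOfCardEqFinrank (linearIndependent_of_det2_ne_zero hdet) (by simp)

theorem latticeSet_eq_span {u v : E²} (hdet : det2 u v ≠ 0) :
    latticeSet u v = Submodule.span ℤ (Set.range (basisOfDet2 hdet)) := by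
  ext p
  rw [SetLike.mem_coe, basisOfDet2, coe_basisOfLinearIndependentOfCardEqFinrank,
    Matrix.range_cons_cons_empty, Submodule.mem_span_pair]
  simp only [latticeSet, Set.mem_ofPred_eq, ← Int.cast_smul_eq_zsmul ℝ]
  exact ⟨fun ⟨m, n, h⟩ => ⟨m, n, h.symm⟩, fun ⟨m, n, h⟩ => ⟨m, n, h.symm⟩⟩

theorem finrank_span_basisOfDet2 {u v : E²} (hdet : det2 u v ≠ 0) :
    finrank ℤ (Submodule.span ℤ (Set.range (basisOfDet2 hdet))) = 2 := by
  rw [ZLattice.rank ℝ]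
  simp

theorem IsLattice2.summable_norm_rpow_neg {L : Set E²} (hL : IsLattice2 L) {t : ℝ}
    (ht : 2 < t) :
    Summable fun p : ↥(L \ {0}) => ‖(p : E²)‖ ^ (-t) := by
  obtain ⟨u, v, hdet, rfl⟩ := hL
  have hsum := ZLattice.summable_norm_rpow (Submodule.span ℤ (Set.range (basisOfDet2 hdet)))
    (-t) (by rw [finrank_span_basisOfDet2]; push_cast; linarith)
  have hsub : latticeSet u v \ {0} ⊆ Submodule.span ℤ (Set.range (basisOfDet2 hdet)) :=
    latticeSet_eq_span hdet ▸ Set.sdiff_subset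
  exact (hsum.comp_injective (Set.inclusion_injective hsub) :)

namespace Real

theorem abs_log_le_rpow_add_rpow_neg_div {r ε : ℝ} (hr : 0 < r) (hε : 0 < ε) :
    |log r| ≤ (r ^ ε + r ^ (-ε)) / ε := by
  rcases le_total 0 (log r) with h | h
  · rw [abs_of_nonneg h]
    calc log r ≤ r ^ ε / ε := log_le_rpow_div hr.le hε
      _ ≤ _ := by gcongr; exact le_add_of_nonneg_right (by positivity)
  · rw [abs_of_nonpos h, ← log_inv]
    calc log r⁻¹ ≤ r⁻¹ ^ ε / ε := log_le_rpow_div (by positivity) hε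
      _ = r ^ (-ε) / ε := by rw [inv_rpow hr.le, rpow_neg hr.le]
      _ ≤ _ := by gcongr; exact le_add_of_nonneg_left (by positivity)

theorem rpow_le_rpow_add_rpow {r p x q : ℝ} (hr : 0 < r) (hpx : p ≤ x) (hxq : x ≤ q) :
    r ^ x ≤ r ^ p + r ^ q := by
  rcases le_total 1 r with h | h
  · exact (rpow_le_rpow_of_exponent_le h hxq).trans (le_add_of_nonneg_left (by positivity))
  · exact (rpow_le_rpow_of_exponent_ge hr h hpx).trans (le_add_of_nonneg_right (by positivity))

theorem abs_log_mul_rpow_neg_le {r ε : ℝ} (hr : 0 < r) (hε : 0 < ε) (t : ℝ) :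
    |log r * r ^ (-t)| ≤ (r ^ (-(t - ε)) + r ^ (-(t + ε))) / ε := by
  rw [abs_mul, abs_of_pos (rpow_pos_of_pos hr _)]
  calc |log r| * r ^ (-t) ≤ (r ^ ε + r ^ (-ε)) / ε * r ^ (-t) := by
        gcongr; exact abs_log_le_rpow_add_rpow_neg_div hr hε
    _ = _ := by
        rw [div_mul_eq_mul_div, add_mul, ← rpow_add hr, ← rpow_add hr]
        ring_nf

end Real

open Real

section DirichletSeries

variable {ι : Type*} {r : ι → ℝ} {γ s : ℝ}

theorem summable_log_mul_rpow_neg (hr : ∀ i, 0 < r i)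
    (hsum : ∀ t, γ < t → Summable fun i => r i ^ (-t)) (hs : γ < s) :
    Summable fun i => log (r i) * r i ^ (-s) := by
  have hε : 0 < (s - γ) / 2 := by linarith
  refine .of_norm_bounded (((hsum _ ?_).add (hsum _ ?_)).div_const _)
    fun i => abs_log_mul_rpow_neg_le (hr i) hε s
  all_goals linarith

theorem hasDerivAt_tsum_rpow_neg (hr : ∀ i, 0 < r i)
    (hsum : ∀ t, γ < t → Summable fun i => r i ^ (-t)) (hs : γ < s) :
    HasDerivAt (fun t => ∑' i, r i ^ (-t)) (∑' i, -(log (r i) * r i ^ (-s))) s := by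
  set ε := (s - γ) / 3 with hε_def
  have hε : 0 < ε := by linarith
  have hdom : Summable fun i => 2 * (r i ^ (-(s + 2 * ε)) + r i ^ (-(s - 2 * ε))) / ε :=
    (((hsum _ (by linarith)).add (hsum _ (by linarith))).mul_left 2).div_const ε
  refine hasDerivAt_tsum_of_isPreconnected (t := Set.Ioo (s - ε) (s + ε))
    (g' := fun i t => -(log (r i) * r i ^ (-t))) hdom isOpen_Ioo isPreconnected_Ioo
    (fun i t _ => ((hasDerivAt_neg t).const_rpow (hr i)).congr_deriv (by ring))
    (fun i t ht => ?_) (Set.mem_Ioo.2 ⟨by linarith, by linarith⟩) (hsum s hs)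
    (Set.mem_Ioo.2 ⟨by linarith, by linarith⟩)
  obtain ⟨ht₁, ht₂⟩ := ht
  rw [norm_neg, Real.norm_eq_abs]
  refine (abs_log_mul_rpow_neg_le (hr i) hε t).trans ?_
  gcongr
  rw [two_mul]
  gcongr <;> apply rpow_le_rpow_add_rpow (hr i) <;> linarith

theorem hasDerivAt_tsum_rpow_neg_div (hr : ∀ i, 0 < r i)
    (hsum : ∀ t, γ < t → Summable fun i => r i ^ (-t)) (hs : γ < s) (hs₀ : s ≠ 0) :
    HasDerivAt (fun t => (∑' i, r i ^ (-t)) / t)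
      (-(∑' i, (s * log (r i) + 1) / r i ^ s) / s ^ 2) s := by
  refine ((hasDerivAt_tsum_rpow_neg hr hsum hs).div (hasDerivAt_id s) hs₀).congr_deriv ?_
  have hsplit : ∑' i, (s * log (r i) + 1) / r i ^ s =
      s * ∑' i, log (r i) * r i ^ (-s) + ∑' i, r i ^ (-s) := by
    rw [← tsum_mul_left, ← (((summable_log_mul_rpow_neg hr hsum hs).mul_left s)).tsum_add
      (hsum s hs)]
    refine tsum_congr fun i => ?_
    rw [rpow_neg (hr i).le]
    ring
  rw [hsplit, tsum_neg, id]
  ring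

end DirichletSeries

theorem IsLattice2.hasDerivAt_epsteinZeta_div {L : Set E²} (hL : IsLattice2 L) {s : ℝ}
    (hs : 2 < s) :
    HasDerivAt (fun t => epsteinZeta L t / t) (Fenergy s L / s ^ 2) s :=
  hasDerivAt_tsum_rpow_neg_div (fun p => norm_pos_iff.2 p.2.2)
    (fun _ ht => hL.summable_norm_rpow_neg ht) hs (by positivity)

theorem strictMonoOn_epsteinZeta_sub_div {L L' : Set E²} (hL : IsLattice2 L)
    (hL' : IsLattice2 L') (hF : ∀ s, 2 < s → Fenergy s L' < Fenergy s L) :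
    StrictMonoOn (fun t => (epsteinZeta L t - epsteinZeta L' t) / t) (Set.Ioi 2) := by
  have hderiv : ∀ s ∈ Set.Ioi (2 : ℝ),
      HasDerivAt (fun t => (epsteinZeta L t - epsteinZeta L' t) / t)
        ((Fenergy s L - Fenergy s L') / s ^ 2) s := fun s hs => by
    simpa only [Pi.sub_def, ← sub_div] using
      (hL.hasDerivAt_epsteinZeta_div hs).sub (hL'.hasDerivAt_epsteinZeta_div hs)
  refine strictMonoOn_of_deriv_pos (convex_Ioi 2)
    (fun s hs => (hderiv s hs).continuousAt.continuousWithinAt) fun s hs => ?_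
  rw [interior_Ioi, Set.mem_Ioi] at hs
  rw [(hderiv s hs).deriv]
  exact div_pos (sub_pos.2 (hF s hs)) (by positivity)

theorem IsLattice2OfCovol.isLattice2 {L : Set E²} {V : ℝ} (hL : IsLattice2OfCovol L V) :
    IsLattice2 L :=
  let ⟨u, v, hdet, _, hL⟩ := hL
  ⟨u, v, hdet, hL⟩

theorem isLattice2_triangularLattice : IsLattice2 triangularLattice :=
  ⟨_, _, by simp [det2, vec2], rfl⟩

/-- If, for every `s > 2`, `A₂` is the unique minimizer (up to rotation) of `F_s` among unit
co-volume lattices, then for all `α > β > 2` and every unit co-volume lattice `L` not a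
rotation of `A₂`, `ζ_L(α) - ζ_{A₂}(α) > (α/β)(ζ_L(β) - ζ_{A₂}(β))`. -/
theorem conjecture_implies_quotient_bound
    (hconj : ∀ s : ℝ, 2 < s → ∀ L : Set (EuclideanSpace ℝ (Fin 2)), IsLattice2OfCovol L 1 →
      Fenergy s triangularLattice ≤ Fenergy s L ∧
      (Fenergy s L = Fenergy s triangularLattice ↔ IsRotationOf L triangularLattice)) :
    ∀ α β : ℝ, 2 < β → β < α →
      ∀ L : Set (EuclideanSpace ℝ (Fin 2)), IsLattice2OfCovol L 1 →
        ¬ IsRotationOf L triangularLattice →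
        epsteinZeta L α - epsteinZeta triangularLattice α >
          (α / β) * (epsteinZeta L β - epsteinZeta triangularLattice β) := by
  intro α β hβ hβα L hL hrot
  have hF : ∀ s, 2 < s → Fenergy s triangularLattice < Fenergy s L := fun s hs =>
    have ⟨hle, hiff⟩ := hconj s hs L hL
    hle.lt_of_ne fun h => hrot (hiff.1 h.symm)
  have hmono := strictMonoOn_epsteinZeta_sub_div hL.isLattice2 isLattice2_triangularLattice hF
  have hlt := hmono (Set.mem_Ioi.2 hβ) (Set.mem_Ioi.2 (hβ.trans hβα)) hβα
  rw [div_lt_div_iff₀ (by linarith) (by linarith)] at hlt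
  rw [gt_iff_lt, div_mul_eq_mul_div, div_lt_iff₀ (by linarith)]
  linarith
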